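/- Let λ₁, λ₂, λ₃, λ₄ ∈ ℝ and Λ = diag(λ₁, λ₂, λ₃, λ₄), and let G be the dimension-4 perfect code generation matrix. Then every entry of the Gram matrix (ΛG)ᴴ·(ΛG) is a real number; equivalently, the columns f₁,…,f₄ of ΛG satisfy f_bᴴ f_a ∈ ℝ for all a, b ∈ {1,2,3,4}. -/
import Mathlib


open Matrix Complex Real

/-- `θ₁ = 2cos(4π/15)`, `θ₂ = 2cos(2π/15)`, `θ₃ = 2cos(16π/15)`, `θ₄ = 2cos(8π/15)`. -/
noncomputable def theta4 : Fin 4 → ℝ :=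
  ![2 * Real.cos (4 * Real.pi / 15), 2 * Real.cos (2 * Real.pi / 15),
    2 * Real.cos (16 * Real.pi / 15), 2 * Real.cos (8 * Real.pi / 15)]

/-- The dimension-4 perfect code generation matrix. -/
noncomputable def perfectG4 : Matrix (Fin 4) (Fin 4) ℂ :=
  Matrix.of fun u v =>
    (1 / (Real.sqrt 15 : ℂ)) *
      (![1 + Complex.I * ((theta4 u : ℂ) ^ 2 - 3),
         (theta4 u : ℂ) + Complex.I * ((theta4 u : ℂ) ^ 3 - 3 * (theta4 u : ℂ)),
         ((theta4 u : ℂ) ^ 3 - 3 * (theta4 u : ℂ)) +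
           Complex.I * (-1 + 4 * (theta4 u : ℂ) - (theta4 u : ℂ) ^ 3),
         (-1 - 3 * (theta4 u : ℂ) + (theta4 u : ℂ) ^ 2 + (theta4 u : ℂ) ^ 3) + Complex.I] v)

lemma cos5_aux (x : ℝ) :
    2 * Real.cos (5*x) = (2*Real.cos x)^5 - 5*(2*Real.cos x)^3 + 5*(2*Real.cos x) := by
  have h5 : 5*x = 3*x + 2*x := by ring
  have hs := Real.sin_sq_add_cos_sq x
  rw [h5, Real.cos_add, Real.cos_three_mul, Real.cos_two_mul, Real.sin_three_mul, Real.sin_two_mul]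
  linear_combination (16 * Real.sin x ^2 * Real.cos x + 4*Real.cos x - 16*Real.cos x^3) * hs

lemma cos_two_pi_div_three' : Real.cos (2*π/3) = -(1/2) := by
  rw [show (2*π/3) = π - π/3 by ring, Real.cos_pi_sub, Real.cos_pi_div_three]

lemma cos_four_pi_div_three' : Real.cos (4*π/3) = -(1/2) := by
  rw [show (4*π/3) = π/3 + π by ring, Real.cos_add_pi, Real.cos_pi_div_three]

lemma theta4_poly : ∀ u, (theta4 u)^4 - (theta4 u)^3 - 4*(theta4 u)^2 + 4*(theta4 u) + 1 = 0 := by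
  have pi_pos := Real.pi_pos
  have key : ∀ x : ℝ, Real.cos (5*x) = -(1/2) → 2*Real.cos x ≠ -1 →
      (2*Real.cos x)^4 - (2*Real.cos x)^3 - 4*(2*Real.cos x)^2 + 4*(2*Real.cos x) + 1 = 0 := by
    intro x h5 hne
    have hc := cos5_aux x
    rw [h5] at hc
    set t := 2*Real.cos x
    have h : (t+1) * (t^4 - t^3 - 4*t^2+4*t+1) = 0 := by linear_combination -hc
    rcases mul_eq_zero.mp h with h' | h'
    · exact absurd (by linarith) hne
    · exact h'
  intro u
  fin_cases u <;> simp only [theta4, Matrix.cons_val_zero, Matrix.cons_val_one, Matrix.head_cons,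
    Fin.mk_zero, Fin.mk_one, Matrix.cons_val_two, Matrix.tail_cons, Matrix.cons_val_three]
  · apply key
    · rw [show 5*(4*π/15) = 4*π/3 by ring]; exact cos_four_pi_div_three'
    · have : 0 < Real.cos (4*π/15) := Real.cos_pos_of_mem_Ioo ⟨by linarith, by linarith⟩
      intro h; linarith
  · apply key
    · rw [show 5*(2*π/15) = 2*π/3 by ring]; exact cos_two_pi_div_three'
    · have : 0 < Real.cos (2*π/15) := Real.cos_pos_of_mem_Ioo ⟨by linarith, by linarith⟩
      intro h; linarith
  · apply key
    · rw [show 5*(16*π/15) = 4*π/3 + 2*π + 2*π by ring, Real.cos_add_two_pi, Real.cos_add_two_pi]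
      exact cos_four_pi_div_three'
    · have h1 : Real.cos (16*π/15) = Real.cos (14*π/15) := by
        rw [show (16*π/15 : ℝ) = 2*π - 14*π/15 by ring, Real.cos_two_pi_sub]
      have h2 : Real.cos (14*π/15) < Real.cos (2*π/3) :=
        Real.cos_lt_cos_of_nonneg_of_le_pi (by linarith) (by linarith) (by linarith)
      rw [cos_two_pi_div_three'] at h2
      intro h; rw [h1] at h; linarith
  · apply key
    · rw [show 5*(8*π/15) = 2*π/3 + 2*π by ring, Real.cos_add_two_pi]
      exact cos_two_pi_div_three'
    · have h2 : Real.cos (2*π/3) < Real.cos (8*π/15) :=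
        Real.cos_lt_cos_of_nonneg_of_le_pi (by linarith) (by linarith) (by linarith)
      rw [cos_two_pi_div_three'] at h2
      intro h; linarith

set_option maxHeartbeats 2000000 in
lemma entries_im (u a b : Fin 4) :
    ((starRingEnd ℂ) (perfectG4 u a) * perfectG4 u b).im = 0 := by
  have ht := theta4_poly u
  set t := theta4 u with hdef
  have h1 : t*(t^4 - t^3 - 4*t^2 + 4*t + 1) = 0 := by linear_combination t*ht
  have h2 : t^2*(t^4 - t^3 - 4*t^2 + 4*t + 1) = 0 := by linear_combination t^2*ht
  ring_nf at h1 h2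
  fin_cases a <;> fin_cases b <;>
    · simp only [perfectG4, Matrix.of_apply, Fin.mk_zero, Fin.mk_one,
        Matrix.cons_val_zero, Matrix.cons_val_one, Matrix.head_cons,
        Matrix.cons_val_two, Matrix.tail_cons, Matrix.cons_val_three]
      simp [← Complex.ofReal_pow, Complex.mul_im, Complex.mul_re, Complex.div_re,
        Complex.div_im, Complex.normSq_apply]
      ring_nf
      try rw [show (Real.sqrt 15)^2 = 15 from Real.sq_sqrt (by norm_num)]
      try linarith [ht, h1, h2]

/-- For `Λ = diag(λ₁,…,λ₄)` real, every entry of the Gram matrix `(ΛG)ᴴ(ΛG)` is real;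
equivalently the columns `f₁,…,f₄` of `ΛG` satisfy `f_bᴴ f_a ∈ ℝ`. -/
theorem stmt14 (lam : Fin 4 → ℝ)
    (A : Matrix (Fin 4) (Fin 4) ℂ)
    (hA : A = Matrix.diagonal (fun u => (lam u : ℂ)) * perfectG4) :
    ∀ a b : Fin 4, ((Aᴴ * A) a b).im = 0 := by
  intro a b
  subst hA
  rw [Matrix.mul_apply]
  rw [Complex.im_sum]
  refine Finset.sum_eq_zero fun u _ => ?_
  rw [Matrix.conjTranspose_apply, Matrix.diagonal_mul, Matrix.diagonal_mul]
  have key : star ((lam u : ℂ) * perfectG4 u a) * ((lam u : ℂ) * perfectG4 u b)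
      = ((lam u ^ 2 : ℝ) : ℂ) * ((starRingEnd ℂ) (perfectG4 u a) * perfectG4 u b) := by
    simp only [star_mul', Complex.star_def, Complex.conj_ofReal]
    push_cast
    ring
  rw [key, Complex.im_ofReal_mul, entries_im, mul_zero]
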